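/- Let μ be a finite Borel measure on ℝ^{n+1} equipped with the s-parabolic distance. For every s-parabolic cube Q there exists a constant A = A(n,s) and a concentric s-parabolic cube Q′ with Q ⊂ Q′ ⊂ 1.1Q such that Q′ has A-small boundary with respect to μ: μ({x̄ ∈ 2Q′ : dist_{p_s}(x̄, ∂Q′) ≤ α ℓ(Q′)}) ≤ A α μ(2Q′) for all α > 0. -/
import Mathlib


open MeasureTheory Set
open scoped ENNReal

noncomputable section

/-- The `s`-parabolic distance on `ℝⁿ × ℝ`:
`dist((x,t),(y,τ)) = max (‖x - y‖) (|t - τ|^(1/(2s)))`. -/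
def pdist (n : ℕ) (s : ℝ) (z w : (Fin n → ℝ) × ℝ) : ℝ :=
  max ‖z.1 - w.1‖ (|z.2 - w.2| ^ (1 / (2 * s)))

/-- The `s`-parabolic distance from a point to a set. -/
def pdistToSet (n : ℕ) (s : ℝ) (z : (Fin n → ℝ) × ℝ) (S : Set ((Fin n → ℝ) × ℝ)) : ℝ :=
  sInf ((fun w => pdist n s z w) '' S)

/-- The closed `s`-parabolic cube with center `c` and side length `h`; concentric
`s`-parabolic dilations `αQ` are obtained by replacing `h` by `α h`. -/
def parCubeC (n : ℕ) (s : ℝ) (c : (Fin n → ℝ) × ℝ) (h : ℝ) : Set ((Fin n → ℝ) × ℝ) :=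
  {z | (∀ i, |z.1 i - c.1 i| ≤ h / 2) ∧ |z.2 - c.2| ≤ h ^ (2 * s) / 2}

def Ucube (n : ℕ) (s : ℝ) (c : (Fin n → ℝ) × ℝ) (h : ℝ) : Set ((Fin n → ℝ) × ℝ) :=
  {z | (∀ i, |z.1 i - c.1 i| < h / 2) ∧ |z.2 - c.2| < h ^ (2 * s) / 2}

variable {n : ℕ} {s : ℝ} {c : (Fin n → ℝ) × ℝ} {a b : ℝ}

lemma cont_sp (i : Fin n) : Continuous fun z : (Fin n → ℝ) × ℝ => |z.1 i - c.1 i| :=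
  (((continuous_apply i).comp continuous_fst).sub continuous_const).abs

lemma cont_tm : Continuous fun z : (Fin n → ℝ) × ℝ => |z.2 - c.2| :=
  (continuous_snd.sub continuous_const).abs

lemma isClosed_parCubeC : IsClosed (parCubeC n s c a) := by
  have h1 : IsClosed {z : (Fin n → ℝ) × ℝ | ∀ i, |z.1 i - c.1 i| ≤ a / 2} := by
    rw [setOf_forall]
    exact isClosed_iInter fun i => isClosed_le (cont_sp i) continuous_const
  exact h1.inter (isClosed_le cont_tm continuous_const)

lemma isOpen_Ucube : IsOpen (Ucube n s c a) := by
  have h1 : IsOpen {z : (Fin n → ℝ) × ℝ | ∀ i, |z.1 i - c.1 i| < a / 2} := by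
    rw [setOf_forall]
    exact isOpen_iInter_of_finite fun i => isOpen_lt (cont_sp i) continuous_const
  exact h1.inter (isOpen_lt cont_tm continuous_const)

lemma Ucube_subset : Ucube n s c a ⊆ parCubeC n s c a :=
  fun z hz => ⟨fun i => (hz.1 i).le, hz.2.le⟩

lemma parCubeC_mono (hs : 0 < s) (ha : 0 ≤ a) (hab : a ≤ b) : parCubeC n s c a ⊆ parCubeC n s c b := by
  intro z hz
  have hr : a ^ (2 * s) ≤ b ^ (2 * s) := Real.rpow_le_rpow ha hab (by positivity)
  exact ⟨fun i => (hz.1 i).trans (by linarith), hz.2.trans (by linarith)⟩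

lemma parCubeC_subset_Ucube (hs : 0 < s) (ha : 0 ≤ a) (hab : a < b) :
    parCubeC n s c a ⊆ Ucube n s c b := by
  intro z hz
  have hr : a ^ (2 * s) < b ^ (2 * s) := Real.rpow_lt_rpow ha hab (by positivity)
  exact ⟨fun i => lt_of_le_of_lt (hz.1 i) (by linarith), lt_of_le_of_lt hz.2 (by linarith)⟩

lemma Ucube_subset_interior : Ucube n s c a ⊆ interior (parCubeC n s c a) :=
  isOpen_Ucube.subset_interior_iff.2 Ucube_subset

lemma frontier_subset : frontier (parCubeC n s c a) ⊆ parCubeC n s c a :=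
  isClosed_parCubeC.frontier_subset

lemma frontier_mem_cases {w : (Fin n → ℝ) × ℝ} (hw : w ∈ frontier (parCubeC n s c a)) :
    (∃ i, a / 2 ≤ |w.1 i - c.1 i|) ∨ a ^ (2 * s) / 2 ≤ |w.2 - c.2| := by
  have h2 : w ∉ Ucube n s c a := fun hU => hw.2 (Ucube_subset_interior hU)
  simp only [Ucube, mem_setOf_eq, not_and_or, not_forall, not_lt] at h2
  tauto


lemma frontier_nonempty (hs : 0 < s) (ha : 0 < a) :
    (frontier (parCubeC n s c a)).Nonempty := by
  rw [nonempty_frontier_iff]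
  constructor
  · exact ⟨c, fun i => by simpa using by positivity, by simpa using by positivity⟩
  · intro huniv
    have hmem : (c.1, c.2 + a ^ (2 * s)) ∈ parCubeC n s c a := huniv ▸ mem_univ _
    have h2 := hmem.2
    have hap : 0 < a ^ (2 * s) := Real.rpow_pos_of_pos ha _
    simp only [add_sub_cancel_left] at h2
    rw [abs_of_pos hap] at h2
    linarith

lemma rpow_superadd {x y p : ℝ} (hx : 0 ≤ x) (hy : 0 ≤ y) (hp : 1 ≤ p) :
    x ^ p + y ^ p ≤ (x + y) ^ p := by
  have h := NNReal.rpow_add_rpow_le_add x.toNNReal y.toNNReal hp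
  have hp0 : (0:ℝ) < p := by linarith
  have h2 : ((x ^ p + y ^ p) ^ (1/p) : ℝ) ≤ x + y := by
    have := (NNReal.coe_le_coe).2 h
    push_cast [NNReal.coe_rpow] at this
    rwa [Real.coe_toNNReal _ hx, Real.coe_toNNReal _ hy] at this
  have hu : (0:ℝ) ≤ x ^ p + y ^ p := by
    have := Real.rpow_nonneg hx p; have := Real.rpow_nonneg hy p; linarith
  calc x ^ p + y ^ p = ((x ^ p + y ^ p) ^ (1/p)) ^ p := by
        rw [← Real.rpow_mul hu, one_div, inv_mul_cancel₀ (ne_of_gt hp0), Real.rpow_one]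
    _ ≤ (x + y) ^ p := Real.rpow_le_rpow (Real.rpow_nonneg hu _) h2 hp0.le

section Geom

variable (hs : 1 / 2 < s) (hs1 : s ≤ 1)
include hs hs1

lemma mem_big_of_close (ha : 0 < a) {α : ℝ} (hα : 0 < α) {z : (Fin n → ℝ) × ℝ}
    (hz : pdistToSet n s z (frontier (parCubeC n s c a)) ≤ α * a) :
    z ∈ parCubeC n s c (a + 4 * α * a) := by
  have hs0 : (0:ℝ) < s := by linarith
  have hp1 : (1:ℝ) ≤ 2 * s := by linarith
  have hp0 : (0:ℝ) < 2 * s := by linarith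
  have hSne : ((fun w => pdist n s z w) '' (frontier (parCubeC n s c a))).Nonempty :=
    (frontier_nonempty hs0 ha).image _
  have hlt : pdistToSet n s z (frontier (parCubeC n s c a)) < 2 * α * a := by
    refine lt_of_le_of_lt hz ?_; nlinarith
  obtain ⟨y, ⟨w, hw, rfl⟩, hy⟩ := exists_lt_of_csInf_lt hSne hlt
  have hwQ : w ∈ parCubeC n s c a := frontier_subset hw
  have hsp : ‖z.1 - w.1‖ < 2 * α * a := lt_of_le_of_lt (le_max_left _ _) hy
  have htm : |z.2 - w.2| ^ (1 / (2 * s)) < 2 * α * a :=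
    lt_of_le_of_lt (le_max_right _ _) hy
  constructor
  · intro i
    have h1 : |z.1 i - w.1 i| ≤ ‖z.1 - w.1‖ := by
      have := norm_le_pi_norm (z.1 - w.1) i
      simpa [Real.norm_eq_abs] using this
    have h2 := hwQ.1 i
    have : |z.1 i - c.1 i| ≤ |z.1 i - w.1 i| + |w.1 i - c.1 i| := by
      calc |z.1 i - c.1 i| = |(z.1 i - w.1 i) + (w.1 i - c.1 i)| := by ring_nf
        _ ≤ _ := abs_add_le _ _
    linarith
  · have ht : |z.2 - w.2| < (2 * α * a) ^ (2 * s) := by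
      have h0 : (0:ℝ) ≤ |z.2 - w.2| ^ (1 / (2 * s)) :=
        Real.rpow_nonneg (abs_nonneg _) _
      have := Real.rpow_lt_rpow h0 htm hp0
      rwa [← Real.rpow_mul (abs_nonneg _), one_div, inv_mul_cancel₀ (ne_of_gt hp0),
        Real.rpow_one] at this
    have hkey : 2 * (2 * α * a) ^ (2 * s) + a ^ (2 * s) ≤ (a + 4 * α * a) ^ (2 * s) := by
      have h1 : a ^ (2*s) + (4 * α * a) ^ (2*s) ≤ (a + 4 * α * a) ^ (2*s) :=
        rpow_superadd ha.le (by positivity) hp1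
      have h2 : (4 * α * a : ℝ) = 2 * (2 * α * a) := by ring
      have h3 : (4 * α * a) ^ (2*s) = (2:ℝ) ^ (2*s) * (2 * α * a) ^ (2*s) := by
        rw [h2]; exact Real.mul_rpow (by norm_num) (by nlinarith)
      have h4 : (2:ℝ) ≤ (2:ℝ) ^ (2*s) := by
        calc (2:ℝ) = 2 ^ (1:ℝ) := (Real.rpow_one 2).symm
        _ ≤ 2 ^ (2*s) := Real.rpow_le_rpow_of_exponent_le (by norm_num) hp1
      nlinarith [Real.rpow_nonneg (show (0:ℝ) ≤ 2*α*a by nlinarith) (2*s)]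
    have h2 := hwQ.2
    have : |z.2 - c.2| ≤ |z.2 - w.2| + |w.2 - c.2| := by
      calc |z.2 - c.2| = |(z.2 - w.2) + (w.2 - c.2)| := by ring_nf
        _ ≤ _ := abs_add_le _ _
    linarith

lemma notMem_Ucube_of_close (ha : 0 < a) {α : ℝ} (hα : 0 < α) (hα2 : α ≤ 1/16)
    {z : (Fin n → ℝ) × ℝ}
    (hz : pdistToSet n s z (frontier (parCubeC n s c a)) ≤ α * a) :
    z ∉ Ucube n s c (a - 4 * α * a) := by
  intro hU
  have hs0 : (0:ℝ) < s := by linarith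
  have hp1 : (1:ℝ) ≤ 2 * s := by linarith
  have hp0 : (0:ℝ) < 2 * s := by linarith
  have hp2 : (2:ℝ) * s ≤ 2 := by linarith
  set τ : ℝ := Real.sqrt 2 * (α * a) with hτdef
  have hτpos : 0 < τ := by
    have := Real.sqrt_pos.2 (show (0:ℝ) < 2 by norm_num); positivity
  have hτgt : α * a < τ := by
    have h1 : (1:ℝ) < Real.sqrt 2 := by
      nlinarith [Real.sq_sqrt (show (0:ℝ) ≤ 2 by norm_num),
        Real.sqrt_nonneg (2:ℝ)]
    nlinarith
  -- every frontier point is at pdist ≥ τ from z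
  have hbound : ∀ y ∈ (fun w => pdist n s z w) '' (frontier (parCubeC n s c a)), τ ≤ y := by
    rintro y ⟨w, hw, rfl⟩
    rcases frontier_mem_cases hw with ⟨i, hi⟩ | htm
    · have hz1 := hU.1 i
      have h1 : 2 * α * a ≤ |z.1 i - w.1 i| := by
        have : |w.1 i - c.1 i| - |z.1 i - c.1 i| ≤ |z.1 i - w.1 i| := by
          have := abs_sub_abs_le_abs_sub (w.1 i - c.1 i) (z.1 i - c.1 i)
          calc |w.1 i - c.1 i| - |z.1 i - c.1 i| ≤ |(w.1 i - c.1 i) - (z.1 i - c.1 i)| := this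
            _ = |z.1 i - w.1 i| := by rw [← abs_neg]; ring_nf
        linarith
      have h2 : |z.1 i - w.1 i| ≤ ‖z.1 - w.1‖ := by
        have := norm_le_pi_norm (z.1 - w.1) i
        simpa [Real.norm_eq_abs] using this
      have hτle : τ ≤ 2 * α * a := by
        have h3 : Real.sqrt 2 ≤ 2 := by
          nlinarith [Real.sq_sqrt (show (0:ℝ) ≤ 2 by norm_num), Real.sqrt_nonneg (2:ℝ)]
        have := mul_pos hα ha
        rw [hτdef]; nlinarith
      exact le_trans (le_trans hτle (le_trans h1 h2)) (le_max_left _ _)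
    · have hz2 := hU.2
      have hsm : ((a - 4*α*a)) ^ (2*s) ≤ (1 - 4*α) * a ^ (2*s) := by
        have he : (a - 4*α*a) = (1 - 4*α) * a := by ring
        rw [he, Real.mul_rpow (by linarith) ha.le]
        have h14 : ((1:ℝ) - 4*α) ^ (2*s) ≤ (1 - 4*α) := by
          have := Real.rpow_le_rpow_of_exponent_ge (show (0:ℝ) < 1 - 4*α by linarith)
            (by linarith) (show (1:ℝ) ≤ 2*s from hp1)
          simpa using this
        have hap : (0:ℝ) ≤ a ^ (2*s) := Real.rpow_nonneg ha.le _
        nlinarith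
      have h1 : τ ^ (2*s) ≤ |z.2 - w.2| := by
        have hτp : τ ^ (2*s) ≤ 2 * α * a ^ (2*s) := by
          rw [hτdef, Real.mul_rpow (Real.sqrt_nonneg 2) (by positivity),
            Real.mul_rpow hα.le ha.le]
          have hA : Real.sqrt 2 ^ (2*s) ≤ 2 := by
            calc Real.sqrt 2 ^ (2*s) ≤ Real.sqrt 2 ^ (2:ℝ) :=
              Real.rpow_le_rpow_of_exponent_le (by
                nlinarith [Real.sq_sqrt (show (0:ℝ) ≤ 2 by norm_num),
                  Real.sqrt_nonneg (2:ℝ)]) hp2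
            _ = 2 := by
              rw [Real.rpow_two, Real.sq_sqrt (by norm_num : (0:ℝ) ≤ 2)]
          have hB : α ^ (2*s) ≤ α := by
            have := Real.rpow_le_rpow_of_exponent_ge hα (by linarith) hp1
            simpa using this
          have hC : a ^ (2*s) ≥ 0 := Real.rpow_nonneg ha.le _
          have hD : α ^ (2*s) ≥ 0 := Real.rpow_nonneg hα.le _
          have hE : Real.sqrt 2 ^ (2*s) ≥ 0 := Real.rpow_nonneg (Real.sqrt_nonneg 2) _
          have hF : Real.sqrt 2 ^ (2*s) * α ^ (2*s) ≤ 2 * α :=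
            mul_le_mul hA hB hD (by norm_num)
          nlinarith
        have habs : |w.2 - c.2| - |z.2 - c.2| ≤ |z.2 - w.2| := by
          have := abs_sub_abs_le_abs_sub (w.2 - c.2) (z.2 - c.2)
          calc |w.2 - c.2| - |z.2 - c.2| ≤ |(w.2 - c.2) - (z.2 - c.2)| := this
            _ = |z.2 - w.2| := by rw [← abs_neg]; ring_nf
        have hap : (0:ℝ) ≤ a ^ (2*s) := Real.rpow_nonneg ha.le _
        nlinarith
      have h2 : τ ≤ |z.2 - w.2| ^ (1 / (2*s)) := by
        have := Real.rpow_le_rpow (Real.rpow_nonneg hτpos.le _) h1 (by positivity :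
          (0:ℝ) ≤ 1 / (2*s))
        rwa [← Real.rpow_mul hτpos.le, mul_one_div, div_self (ne_of_gt hp0),
          Real.rpow_one] at this
      exact le_trans h2 (le_max_right _ _)
  have hSne : ((fun w => pdist n s z w) '' (frontier (parCubeC n s c a))).Nonempty :=
    (frontier_nonempty hs0 ha).image _
  have : τ ≤ pdistToSet n s z (frontier (parCubeC n s c a)) := le_csInf hSne hbound
  linarith

end Geom

open Metric in
lemma exists_good_radius (hs0 : 0 < s) (μ : Measure ((Fin n → ℝ) × ℝ)) [IsFiniteMeasure μ]
    {h : ℝ} (hh : 0 < h) :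
    ∃ a ∈ Icc h ((11/10) * h), ∀ δ : ℝ, 0 < δ → δ ≤ h / 2 →
      μ (parCubeC n s c (a + δ) \ Ucube n s c (a - δ)) ≤
        ENNReal.ofReal ((1000 * (μ (parCubeC n s c (2 * h))).toReal / h) * δ) := by
  set M : ℝ := (μ (parCubeC n s c (2 * h))).toReal with hM
  have hM0 : 0 ≤ M := ENNReal.toReal_nonneg
  have hMeq : μ (parCubeC n s c (2 * h)) = ENNReal.ofReal M :=
    (ENNReal.ofReal_toReal (measure_ne_top μ _)).symm
  set K : ℝ := 1000 * M / h with hK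
  by_contra hcon
  push_neg at hcon
  choose! δf hpos hle hbig using hcon
  -- annuli are contained in the big cube
  have hann_sub : ∀ a ∈ Icc h ((11/10) * h),
      parCubeC n s c (a + δf a) \ Ucube n s c (a - δf a) ⊆ parCubeC n s c (2 * h) := by
    intro a ha
    refine (diff_subset).trans (parCubeC_mono hs0 ?_ ?_)
    · have := (hpos a ha); have := ha.1; linarith
    · have := hle a ha; have := ha.2; linarith
  -- the case M = 0
  rcases eq_or_lt_of_le hM0 with hM0' | hMpos
  · have hIcc : h ∈ Icc h ((11/10) * h) := ⟨le_refl h, by linarith⟩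
    have h1 := hbig h hIcc
    have h2 : μ (parCubeC n s c (h + δf h) \ Ucube n s c (h - δf h)) ≤ 0 := by
      calc μ _ ≤ μ (parCubeC n s c (2 * h)) := measure_mono (hann_sub h hIcc)
        _ = ENNReal.ofReal M := hMeq
        _ = 0 := by rw [← hM0', ENNReal.ofReal_zero]
    exact absurd (lt_of_lt_of_le h1 h2) (by simp)
  have hKpos : 0 < K := by rw [hK]; positivity
  -- Vitali covering
  obtain ⟨u, hut, hdisj, hcov⟩ :=
    Vitali.exists_disjoint_subfamily_covering_enlargement_closedBall
      (Icc h ((11/10) * h)) id δf (h / 2) (fun a ha => hle a ha) 4 (by norm_num)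
  have hucnt : u.Countable := by
    refine hdisj.countable_of_nonempty_interior fun b hb => ?_
    exact ⟨b, ball_subset_interior_closedBall (mem_ball_self (hpos b (hut hb)))⟩
  -- annuli
  set Ann : ℝ → Set ((Fin n → ℝ) × ℝ) :=
    fun b => parCubeC n s c (b + δf b) \ Ucube n s c (b - δf b) with hAnn
  have hAnnDisj : u.PairwiseDisjoint Ann := by
    intro b1 hb1 b2 hb2 hne
    have hDB := hdisj hb1 hb2 hne
    have h1 : b1 ∈ closedBall (id b1) (δf b1) := mem_closedBall_self (hpos b1 (hut hb1)).le
    have h2 : b2 ∈ closedBall (id b2) (δf b2) := mem_closedBall_self (hpos b2 (hut hb2)).le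
    -- intervals are separated
    have hsep : b1 + δf b1 < b2 - δf b2 ∨ b2 + δf b2 < b1 - δf b1 := by
      by_contra hno
      push_neg at hno
      have hx : max (b1 - δf b1) (b2 - δf b2) ∈
          closedBall (id b1) (δf b1) ∩ closedBall (id b2) (δf b2) := by
        simp only [Real.closedBall_eq_Icc, id_eq, mem_inter_iff, mem_Icc]
        constructor
        · exact ⟨le_max_left _ _, max_le (by
            have := (hpos b1 (hut hb1)); linarith) (by linarith [hno.2])⟩
        · exact ⟨le_max_right _ _, max_le (by linarith [hno.1]) (by
            have := (hpos b2 (hut hb2)); linarith)⟩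
      exact (hDB.ne_of_mem hx.1 hx.2) rfl
    have key : ∀ p q : ℝ, p + δf p < q - δf q → p ∈ u → q ∈ u →
        Disjoint (Ann p) (Ann q) := by
      intro p q hpq hpu hqu
      rw [Set.disjoint_left]
      intro z hzp hzq
      have hz1 : z ∈ parCubeC n s c (p + δf p) := hzp.1
      have hz2 : z ∈ Ucube n s c (q - δf q) := by
        refine parCubeC_subset_Ucube hs0 ?_ hpq hz1
        have := hpos p (hut hpu); have := (hut hpu).1; linarith
      exact hzq.2 hz2
    rcases hsep with hsep | hsep
    · exact key b1 b2 hsep hb1 hb2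
    · exact (key b2 b1 hsep hb2 hb1).symm
  have hAnnMeas : ∀ b ∈ u, MeasurableSet (Ann b) :=
    fun b _ => (isClosed_parCubeC.measurableSet).diff isOpen_Ucube.measurableSet
  -- the covering inequality
  have hcover : Icc h ((11/10) * h) ⊆ ⋃ b ∈ u, closedBall b (4 * δf b) := by
    intro a ha
    obtain ⟨b, hb, hsub⟩ := hcov a ha
    exact mem_biUnion hb (hsub (mem_closedBall_self (hpos a ha).le))
  have hvol : ENNReal.ofReal (h / 10) ≤ ∑' b : u, ENNReal.ofReal (8 * δf b) := by
    calc ENNReal.ofReal (h / 10) = volume (Icc h ((11/10) * h)) := by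
          rw [Real.volume_Icc]; congr 1; ring
      _ ≤ volume (⋃ b ∈ u, closedBall b (4 * δf b)) := measure_mono hcover
      _ ≤ ∑' b : u, volume (closedBall (b : ℝ) (4 * δf (b : ℝ))) :=
          measure_biUnion_le volume hucnt _
      _ = ∑' b : u, ENNReal.ofReal (8 * δf b) := by
          congr 1; funext b; rw [Real.volume_closedBall]; congr 1; ring
  have hterm : ∀ b : u, ENNReal.ofReal (8 * δf b) ≤
      ENNReal.ofReal (8 / K) * μ (Ann b) := by
    intro ⟨b, hb⟩
    have h1 : ENNReal.ofReal (K * δf b) ≤ μ (Ann b) := (hbig b (hut hb)).le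
    calc ENNReal.ofReal (8 * δf b) = ENNReal.ofReal ((8 / K) * (K * δf b)) := by
          congr 1; field_simp
      _ = ENNReal.ofReal (8 / K) * ENNReal.ofReal (K * δf b) := by
          rw [ENNReal.ofReal_mul (by positivity)]
      _ ≤ _ := by exact mul_le_mul_right h1 _
  have hsum : ∑' b : u, μ (Ann b) ≤ ENNReal.ofReal M := by
    rw [← measure_biUnion hucnt hAnnDisj hAnnMeas, ← hMeq]
    refine measure_mono (iUnion₂_subset fun b hb => hann_sub b (hut hb))
  have hfinal : ENNReal.ofReal (h / 10) ≤ ENNReal.ofReal (h / 125) := by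
    calc ENNReal.ofReal (h / 10) ≤ ∑' b : u, ENNReal.ofReal (8 * δf b) := hvol
      _ ≤ ∑' b : u, ENNReal.ofReal (8 / K) * μ (Ann b) := ENNReal.tsum_le_tsum hterm
      _ = ENNReal.ofReal (8 / K) * ∑' b : u, μ (Ann b) := ENNReal.tsum_mul_left
      _ ≤ ENNReal.ofReal (8 / K) * ENNReal.ofReal M := mul_le_mul_right hsum _
      _ = ENNReal.ofReal ((8 / K) * M) := by
          rw [← ENNReal.ofReal_mul (by positivity)]
      _ = ENNReal.ofReal (h / 125) := by
          congr 1; rw [hK]; field_simp; ring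
  rw [ENNReal.ofReal_le_ofReal_iff (by positivity)] at hfinal
  linarith

/-- Small-boundary cubes exist: for every finite Borel measure `μ` on `ℝ^{n+1}` with the
`s`-parabolic distance there is `A = A(n,s) > 0` such that every `s`-parabolic cube `Q`
admits a concentric `s`-parabolic cube `Q′` with `Q ⊂ Q′ ⊂ 1.1Q` and `A`-small boundary:
`μ({x̄ ∈ 2Q′ : dist_{p_s}(x̄, ∂Q′) ≤ α ℓ(Q′)}) ≤ A α μ(2Q′)` for all `α > 0`. -/
theorem stmt_9 (n : ℕ) (s : ℝ) (hs : 1 / 2 < s) (hs1 : s ≤ 1) :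
    ∃ A : ℝ, 0 < A ∧
      ∀ (μ : Measure ((Fin n → ℝ) × ℝ)), IsFiniteMeasure μ →
        ∀ (c : (Fin n → ℝ) × ℝ) (h : ℝ), 0 < h →
          ∃ h' : ℝ, h ≤ h' ∧ h' ≤ 1.1 * h ∧
            ∀ α : ℝ, 0 < α →
              μ {z ∈ parCubeC n s c (2 * h') |
                  pdistToSet n s z (frontier (parCubeC n s c h')) ≤ α * h'} ≤
                ENNReal.ofReal (A * α) * μ (parCubeC n s c (2 * h')) := by
  have hs0 : (0:ℝ) < s := by linarith
  refine ⟨4400, by norm_num, ?_⟩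
  intro μ hfin c h hh
  haveI := hfin
  obtain ⟨a, haI, hgood⟩ := exists_good_radius (c := c) hs0 μ hh
  have ha : 0 < a := lt_of_lt_of_le hh haI.1
  refine ⟨a, haI.1, by have := haI.2; nlinarith [haI.2], ?_⟩
  intro α hα
  set M : ℝ := (μ (parCubeC n s c (2 * h))).toReal with hM
  have hM0 : 0 ≤ M := ENNReal.toReal_nonneg
  have hMeq : μ (parCubeC n s c (2 * h)) = ENNReal.ofReal M :=
    (ENNReal.ofReal_toReal (measure_ne_top μ _)).symm
  have hmono : μ (parCubeC n s c (2 * h)) ≤ μ (parCubeC n s c (2 * a)) :=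
    measure_mono (parCubeC_mono hs0 (by linarith) (by linarith [haI.1]))
  by_cases hcase : α < 1/16
  · -- small α : use the good radius estimate
    have hδpos : 0 < 4 * α * a := by nlinarith
    have hδle : 4 * α * a ≤ h / 2 := by nlinarith [haI.2]
    have hsub : {z ∈ parCubeC n s c (2 * a) |
        pdistToSet n s z (frontier (parCubeC n s c a)) ≤ α * a} ⊆
        parCubeC n s c (a + 4 * α * a) \ Ucube n s c (a - 4 * α * a) := by
      rintro z ⟨_, hz2⟩
      exact ⟨mem_big_of_close hs hs1 ha hα hz2,
        notMem_Ucube_of_close hs hs1 ha hα (le_of_lt hcase) hz2⟩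
    calc μ _ ≤ μ (parCubeC n s c (a + 4 * α * a) \ Ucube n s c (a - 4 * α * a)) :=
          measure_mono hsub
      _ ≤ ENNReal.ofReal ((1000 * M / h) * (4 * α * a)) := hgood _ hδpos hδle
      _ ≤ ENNReal.ofReal (4400 * α * M) := by
          refine ENNReal.ofReal_le_ofReal ?_
          rw [div_mul_eq_mul_div, div_le_iff₀ hh]
          nlinarith [mul_nonneg (mul_nonneg hM0 hα.le) (sub_nonneg.2 haI.2)]
      _ = ENNReal.ofReal (4400 * α) * ENNReal.ofReal M := by
          rw [← ENNReal.ofReal_mul (by positivity), mul_assoc]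
      _ ≤ ENNReal.ofReal (4400 * α) * μ (parCubeC n s c (2 * a)) := by
          rw [← hMeq]; exact mul_le_mul_right hmono _
  · -- large α : trivial estimate
    push_neg at hcase
    have h1 : (1:ℝ≥0∞) ≤ ENNReal.ofReal (4400 * α) := by
      rw [show (1:ℝ≥0∞) = ENNReal.ofReal 1 by simp]
      exact ENNReal.ofReal_le_ofReal (by nlinarith)
    calc μ _ ≤ μ (parCubeC n s c (2 * a)) := measure_mono (sep_subset _ _)
      _ = 1 * μ (parCubeC n s c (2 * a)) := (one_mul _).symm
      _ ≤ ENNReal.ofReal (4400 * α) * μ (parCubeC n s c (2 * a)) :=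
          mul_le_mul_left h1 _
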